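/- Let Γ = [X_{στ^{−1}}]_{σ,τ∈G} be the group matrix of a finite group G, set ∂_τ = (1/|G|) · ∂(det Γ)/∂X_τ, and let γ ∈ G act on polynomials by the substitution X_τ ↦ X_{γτ}. Then for all γ, τ ∈ G, γ(∂_τ) = sgn(γ) · ∂_{γτ}, where sgn(γ) is the sign of the permutation σ ↦ γσ of the set G. -/
import Mathlib


open scoped BigOperators

/-- The group matrix `Γ = [X_{στ⁻¹}]` of a finite group `G`, as a matrix over the
polynomial ring `ℚ[X_σ : σ ∈ G]`. -/
noncomputable def groupMatrix (G : Type*) [Group G] [Fintype G] [DecidableEq G] :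
    Matrix G G (MvPolynomial G ℚ) :=
  Matrix.of fun σ τ : G => MvPolynomial.X (σ * τ⁻¹)

/-- The group determinant of a finite group `G`. -/
noncomputable def groupDet (G : Type*) [Group G] [Fintype G] [DecidableEq G] :
    MvPolynomial G ℚ :=
  (groupMatrix G).det

/-- `∂_τ = (1/|G|) ∂(det Γ)/∂X_τ`. -/
noncomputable def groupDetDeriv (G : Type*) [Group G] [Fintype G] [DecidableEq G] (τ : G) :
    MvPolynomial G ℚ :=
  ((Fintype.card G : ℚ))⁻¹ • MvPolynomial.pderiv τ (groupDet G)

/-- For `γ ∈ G` acting on polynomials by the substitution `X_τ ↦ X_{γτ}`, one has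
`γ(∂_τ) = sgn(γ) · ∂_{γτ}`, where `sgn γ` is the sign of the permutation `σ ↦ γσ` of `G`. -/
theorem stmt16 (G : Type*) [Group G] [Fintype G] [DecidableEq G] (γ τ : G) :
    MvPolynomial.rename (fun ρ : G => γ * ρ) (groupDetDeriv G τ) =
      MvPolynomial.C (((Equiv.Perm.sign (Equiv.mulLeft γ) : ℤ) : ℚ)) *
        groupDetDeriv G (γ * τ) := by
  have hinj : Function.Injective (fun ρ : G => γ * ρ) := mul_right_injective γ
  have hmap : (groupMatrix G).map (MvPolynomial.rename fun ρ : G => γ * ρ)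
      = (groupMatrix G).submatrix (Equiv.mulLeft γ) id := by
    ext σ δ
    simp [groupMatrix, Matrix.map_apply, Matrix.submatrix_apply, mul_assoc]
  have hdet : MvPolynomial.rename (fun ρ : G => γ * ρ) (groupDet G)
      = MvPolynomial.C (((Equiv.Perm.sign (Equiv.mulLeft γ) : ℤ) : ℚ)) * groupDet G := by
    have := (MvPolynomial.rename (R := ℚ) (fun ρ : G => γ * ρ)).toRingHom.map_det (groupMatrix G)
    rw [groupDet]
    erw [this, RingHom.mapMatrix_apply]
    erw [hmap]
    rw [Matrix.det_permute]; rw [show (groupMatrix G).det = groupDet G from rfl]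
    congr 1
  have key := MvPolynomial.pderiv_rename hinj τ (groupDet G)
  unfold groupDetDeriv
  rw [map_smul, ← key, hdet, Derivation.leibniz, MvPolynomial.pderiv_C, smul_zero, add_zero,
    smul_eq_mul, mul_smul_comm]
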